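/- (Nonnegativity of the Jacobian-difference determinant and its exact vanishing locus.) For all p, q ∈ ℝ² with p ≠ o and q ≠ o, det(J_h(p) − J_h(q)) ≥ 0, and det(J_h(p) − J_h(q)) = 0 if and only if there exists a real t > 0 with p − o = t·(q − o) (i.e. p − o and q − o are positively proportional). -/

import Mathlib

/-!
Writing `u = p - o`, `v = q - o`, `r = ‖u‖`, `s = ‖v‖`, a direct expansion gives
`det (J_h(p) - J_h(q)) = (r + s) (r s - ⟪u, v⟫) / (r² s²)`.
So the determinant is nonnegative by Cauchy–Schwarz, and vanishes exactly in the equality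
case `⟪u, v⟫ = ‖u‖ ‖v‖`, i.e. when `u` and `v` are positively proportional.
-/

noncomputable section

/-- The sensor location `o = (a, b)`. -/
def oPt (a b : ℝ) : EuclideanSpace ℝ (Fin 2) := WithLp.toLp 2 ![a, b]

/-- Matrix–vector multiplication, viewed as a map on the Euclidean plane. -/
def mv (M : Matrix (Fin 2) (Fin 2) ℝ) (u : EuclideanSpace ℝ (Fin 2)) :
    EuclideanSpace ℝ (Fin 2) := WithLp.toLp 2 (M.mulVec u)

/-- Range `r(p) = √((p₁−a)² + (p₂−b)²)` to the sensor located at `(a, b)`. -/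
def rr (a b : ℝ) (p : EuclideanSpace ℝ (Fin 2)) : ℝ :=
  Real.sqrt ((p 0 - a) ^ 2 + (p 1 - b) ^ 2)

/-- Bearing `θ(p)`: polar angle in `(−π, π]` of the complex number `(p₁−a) + i(p₂−b)`. -/
def theta (a b : ℝ) (p : EuclideanSpace ℝ (Fin 2)) : ℝ :=
  Complex.arg ⟨p 0 - a, p 1 - b⟩

/-- Jacobian matrix of the range–bearing measurement map at `p`. -/
def Jh (a b : ℝ) (p : EuclideanSpace ℝ (Fin 2)) : Matrix (Fin 2) (Fin 2) ℝ :=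
  !![(p 0 - a) / rr a b p, (p 1 - b) / rr a b p;
     -(p 1 - b) / (rr a b p) ^ 2, (p 0 - a) / (rr a b p) ^ 2]

/-- The range–bearing measurement map `h(p) = (r(p), θ(p))`. -/
def hMeas (a b : ℝ) (p : EuclideanSpace ℝ (Fin 2)) : EuclideanSpace ℝ (Fin 2) :=
  WithLp.toLp 2 ![rr a b p, theta a b p]

/-- The linearization remainder `g(u) = h(x + Eu) − h(x) − J_h(x)·(Eu)`. -/
def gRem (a b : ℝ) (x : EuclideanSpace ℝ (Fin 2)) (E : Matrix (Fin 2) (Fin 2) ℝ)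
    (u : EuclideanSpace ℝ (Fin 2)) : EuclideanSpace ℝ (Fin 2) :=
  hMeas a b (x + mv E u) - hMeas a b x - mv (Jh a b x) (mv E u)

open InnerProductGeometry
open scoped InnerProductSpace

theorem real_inner_eq_norm_mul_iff_exists_pos_smul {V : Type*} [NormedAddCommGroup V]
    [InnerProductSpace ℝ V] {x y : V} (hx : x ≠ 0) (hy : y ≠ 0) :
    ⟪x, y⟫_ℝ = ‖x‖ * ‖y‖ ↔ ∃ t : ℝ, 0 < t ∧ x = t • y := by
  rw [real_inner_comm, mul_comm, inner_eq_mul_norm_iff_angle_eq_zero hy hx, angle_eq_zero_iff]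
  exact and_iff_right hy

/-- The Jacobian of `u ↦ (‖u‖, arg u)` at `u`. -/
def polarJacobian (u : EuclideanSpace ℝ (Fin 2)) : Matrix (Fin 2) (Fin 2) ℝ :=
  !![u 0 / ‖u‖, u 1 / ‖u‖; -u 1 / ‖u‖ ^ 2, u 0 / ‖u‖ ^ 2]

section polarJacobian

variable {u v : EuclideanSpace ℝ (Fin 2)}

theorem det_polarJacobian_sub (hu : u ≠ 0) (hv : v ≠ 0) :
    (polarJacobian u - polarJacobian v).det =
      (‖u‖ + ‖v‖) * (‖u‖ * ‖v‖ - ⟪u, v⟫_ℝ) / (‖u‖ ^ 2 * ‖v‖ ^ 2) := by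
  have hr : ‖u‖ ≠ 0 := norm_ne_zero_iff.2 hu
  have hs : ‖v‖ ≠ 0 := norm_ne_zero_iff.2 hv
  have hr2 := EuclideanSpace.real_norm_sq_eq u
  have hs2 := EuclideanSpace.real_norm_sq_eq v
  simp only [Fin.sum_univ_two] at hr2 hs2
  rw [Matrix.det_fin_two, eq_div_iff (by positivity)]
  simp only [polarJacobian, Matrix.sub_apply, Matrix.of_apply, Matrix.cons_val',
    Matrix.cons_val_zero, Matrix.cons_val_one, Matrix.empty_val', Matrix.cons_val_fin_one,
    EuclideanSpace.inner_eq_star_dotProduct, dotProduct, Fin.sum_univ_two, star_trivial]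
  field_simp
  linear_combination (-‖v‖ ^ 3) * hr2 - ‖u‖ ^ 3 * hs2

theorem det_polarJacobian_sub_nonneg (hu : u ≠ 0) (hv : v ≠ 0) :
    0 ≤ (polarJacobian u - polarJacobian v).det := by
  rw [det_polarJacobian_sub hu hv]
  have := sub_nonneg.2 (real_inner_le_norm u v)
  positivity

theorem det_polarJacobian_sub_eq_zero_iff (hu : u ≠ 0) (hv : v ≠ 0) :
    (polarJacobian u - polarJacobian v).det = 0 ↔ ∃ t : ℝ, 0 < t ∧ u = t • v := by
  have hr : 0 < ‖u‖ := norm_pos_iff.2 hu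
  have hs : 0 < ‖v‖ := norm_pos_iff.2 hv
  rw [det_polarJacobian_sub hu hv, ← real_inner_eq_norm_mul_iff_exists_pos_smul hu hv,
    div_eq_zero_iff, mul_eq_zero, sub_eq_zero, eq_comm (a := ⟪u, v⟫_ℝ)]
  have hsum : ‖u‖ + ‖v‖ ≠ 0 := by positivity
  have hden : ‖u‖ ^ 2 * ‖v‖ ^ 2 ≠ 0 := by positivity
  simp only [hsum, hden, false_or, or_false]

end polarJacobian

theorem sub_oPt_apply_zero (a b : ℝ) (p : EuclideanSpace ℝ (Fin 2)) :
    (p - oPt a b) 0 = p 0 - a := by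
  simp [oPt]

theorem sub_oPt_apply_one (a b : ℝ) (p : EuclideanSpace ℝ (Fin 2)) :
    (p - oPt a b) 1 = p 1 - b := by
  simp [oPt]

theorem rr_eq_norm_sub_oPt (a b : ℝ) (p : EuclideanSpace ℝ (Fin 2)) :
    rr a b p = ‖p - oPt a b‖ := by
  rw [EuclideanSpace.norm_eq, rr, Fin.sum_univ_two, sub_oPt_apply_zero, sub_oPt_apply_one]
  simp only [Real.norm_eq_abs, sq_abs]

theorem Jh_eq_polarJacobian (a b : ℝ) (p : EuclideanSpace ℝ (Fin 2)) :
    Jh a b p = polarJacobian (p - oPt a b) := by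
  rw [Jh, polarJacobian, ← rr_eq_norm_sub_oPt, sub_oPt_apply_zero, sub_oPt_apply_one]

/-- **Nonnegativity of the Jacobian-difference determinant and its vanishing locus.** -/
theorem det_jacobianDiff_nonneg_and_vanishing
    (a b : ℝ) (p q : EuclideanSpace ℝ (Fin 2))
    (hp : p ≠ oPt a b)
    (hq : q ≠ oPt a b) :
    0 ≤ (Jh a b p - Jh a b q).det ∧
      ((Jh a b p - Jh a b q).det = 0 ↔
        ∃ t : ℝ, 0 < t ∧
          p - oPt a b =
            t • (q - oPt a b)) := by
  rw [Jh_eq_polarJacobian, Jh_eq_polarJacobian]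
  have hu : p - oPt a b ≠ 0 := sub_ne_zero.2 hp
  have hv : q - oPt a b ≠ 0 := sub_ne_zero.2 hq
  exact ⟨det_polarJacobian_sub_nonneg hu hv, det_polarJacobian_sub_eq_zero_iff hu hv⟩
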